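/- arXiv:1605.00211 — 3 statements merged into one kernel-verified Lean document; each statement's English description precedes it below -/
import Mathlib

section
/- Let M ≥ 1 be the number of slots, let η ∈ (0,1], P_p > 0, P_int > 0, and for each slot i = 1,…,M let h_sp^i > 0 and θ_i > 0 be given constants. Suppose (ᾱ, Ē) with ᾱ ∈ [0,1]^M and Ē ∈ [0,∞)^M is feasible, i.e. it satisfies the energy-causality constraints ∑_{j=1}^i E_j ≤ ∑_{j=1}^i (1−α_j) η P_p for every i = 1,…,M and the interference constraints h_sp^i E_i ≤ α_i P_int for every i. If the total harvested energy is not exhausted, i.e. ∑_{j=1}^M E_j < ∑_{j=1}^M (1−α_j) η P_p, and moreover α_M > 0 and the interference constraint in slot M is slack, i.e. h_sp^M E_M < α_M P_int, then there exists a feasible pair (ᾱ, Ē′) with Ē′ ∈ [0,∞)^M whose objective value ∑_{i=1}^M α_i log₂(1 + θ_i E′_i / α_i) is strictly greater than ∑_{i=1}^M α_i log₂(1 + θ_i E_i / α_i). Consequently, any optimal policy (under these slackness conditions) must satisfy ∑_{i=1}^M E_i* = ∑_{i=1}^M (1 − α_i*) η P_p. -/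
/-!
Raising the energy of the last slot by a small `ε > 0` keeps every constraint: causality in the
earlier slots does not see the change, causality in the last slot and the interference
constraint there have room to spare, and the rate of the last slot strictly increases in its
energy since `α_M > 0`.
-/

open Finset Function Real

theorem sum_Iic_update_add_le_of_isTop {ι : Type*} [LinearOrder ι] [Fintype ι]
    [LocallyFiniteOrderBot ι] {m : ι} (hm : IsTop m) {E H : ι → ℝ} {ε : ℝ}
    (hcaus : ∀ i, ∑ j ∈ Iic i, E j ≤ ∑ j ∈ Iic i, H j)
    (hε : ε ≤ ∑ i, H i - ∑ i, E i) (i : ι) :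
    ∑ j ∈ Iic i, update E m (E m + ε) j ≤ ∑ j ∈ Iic i, H j := by
  rcases (hm i).eq_or_lt with rfl | hi
  · have huniv : Iic i = univ := by ext j; simp [hm j]
    rw [← add_sum_erase univ E (mem_univ i)] at hε
    rw [huniv, sum_update_of_mem (mem_univ i), sdiff_singleton_eq_erase]
    linarith
  · rw [sum_update_of_notMem (by simpa using hi)]
    exact hcaus i

theorem sum_lt_sum_update {ι β : Type*} [Fintype ι] [DecidableEq ι] [AddCommMonoid β]
    [PartialOrder β] [IsOrderedCancelAddMonoid β] (g : ι → β → β) (E : ι → β) (m : ι)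
    {y : β} (h : g m (E m) < g m y) :
    ∑ i, g i (E i) < ∑ i, g i (update E m y i) := by
  refine sum_lt_sum (fun i _ => ?_) ⟨m, mem_univ m, by simpa using h⟩
  rcases eq_or_ne i m with rfl | hi
  · simpa using h.le
  · simp [hi]

theorem mul_logb_one_add_div_lt_of_lt {a θ x y : ℝ} (ha : 0 < a) (hθ : 0 < θ) (hx : 0 ≤ x)
    (hxy : x < y) : a * logb 2 (1 + θ * x / a) < a * logb 2 (1 + θ * y / a) := by
  gcongr
  · norm_num

/-- If a feasible offline policy `(α, E)` does not exhaust all the harvested energy by the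
end of the `M` slots, and in the last slot the time-sharing parameter is positive and the
interference constraint is slack, then there is another feasible energy allocation `E'`
(with the same time sharing `α`) achieving a strictly larger sum rate.  Consequently an
optimal policy must use all the harvested energy. -/
theorem offline_policy_must_exhaust_energy
    (M : ℕ) (hM : 1 ≤ M)
    (η Pp Pint : ℝ)
    (hsp θ : Fin M → ℝ) (hhsp : ∀ i, 0 < hsp i) (hθ : ∀ i, 0 < θ i)
    (α E : Fin M → ℝ)
    (hE0 : ∀ i, 0 ≤ E i)
    (hcaus : ∀ i : Fin M,
      ∑ j ∈ Finset.Iic i, E j ≤ ∑ j ∈ Finset.Iic i, (1 - α j) * η * Pp)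
    (hint : ∀ i : Fin M, hsp i * E i ≤ α i * Pint)
    (hslack : ∑ i, E i < ∑ i, (1 - α i) * η * Pp)
    (hαM : 0 < α ⟨M - 1, by omega⟩)
    (hintM : hsp ⟨M - 1, by omega⟩ * E ⟨M - 1, by omega⟩
        < α ⟨M - 1, by omega⟩ * Pint) :
    ∃ E' : Fin M → ℝ,
      (∀ i, 0 ≤ E' i) ∧
      (∀ i : Fin M,
        ∑ j ∈ Finset.Iic i, E' j ≤ ∑ j ∈ Finset.Iic i, (1 - α j) * η * Pp) ∧
      (∀ i : Fin M, hsp i * E' i ≤ α i * Pint) ∧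
      (∑ i, α i * Real.logb 2 (1 + θ i * E i / α i))
        < ∑ i, α i * Real.logb 2 (1 + θ i * E' i / α i) := by
  set m : Fin M := ⟨M - 1, by omega⟩
  have hm : IsTop m := fun j => Fin.le_def.mpr (Nat.le_sub_one_of_lt j.isLt)
  obtain ⟨ε, hε, hεS, hεint⟩ : ∃ ε > 0, ε ≤ ∑ i, (1 - α i) * η * Pp - ∑ i, E i ∧
      ε ≤ (α m * Pint - hsp m * E m) / hsp m :=
    ⟨_, lt_min (by linarith) (div_pos (by linarith) (hhsp m)), min_le_left _ _,
      min_le_right _ _⟩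
  refine ⟨update E m (E m + ε), ?_, sum_Iic_update_add_le_of_isTop hm hcaus hεS, ?_, ?_⟩
  · exact (forall_update_iff E fun _ e => 0 ≤ e).2 ⟨by linarith [hE0 m], fun i _ => hE0 i⟩
  · refine (forall_update_iff E fun i e => hsp i * e ≤ α i * Pint).2 ⟨?_, fun i _ => hint i⟩
    rw [le_div_iff₀ (hhsp m)] at hεint
    linarith
  · exact sum_lt_sum_update (fun i e => α i * logb 2 (1 + θ i * e / α i)) E m
      (mul_logb_one_add_div_lt_of_lt hαM (hθ m) (hE0 m) (by linarith))
end

section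
/- Fix ζ > 0, let z* > 1 be the unique solution of z·ln z − z − ζ + 1 = 0, and set α₀ = ζ/(ζ + z* − 1). Then α₀ ∈ (0,1), and α₀ is the unique global maximizer of g_ζ(α) = α · log₂(1 + ζ(1−α)/α) over α ∈ (0,1); that is, g_ζ(α) < g_ζ(α₀) for every α ∈ (0,1) with α ≠ α₀. -/
/-!
Substituting `u = 1 + ζ(1−α)/α`, i.e. `α = ζ/(ζ + u − 1)`, turns `g_ζ` into
`(ζ / ln 2) · ln u / (ζ + u − 1)`. The root equation says `z* ln z* = ζ + z* − 1`, so the value of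
`ln u / (ζ + u − 1)` at `u = z*` is `1 / z*`, and `ln u / (ζ + u − 1) < 1 / z*` rearranges to
`ln u < ln z* + (u − z*) / z*`: the graph of `ln` lies strictly below its tangent at `z*`.
-/

open Real

namespace Real

theorem log_lt_log_add_sub_div {u z : ℝ} (hu : 0 < u) (hz : 0 < z) (hne : u ≠ z) :
    log u < log z + (u - z) / z := by
  have h := log_lt_sub_one_of_pos (div_pos hu hz) (by rwa [Ne, div_eq_one_iff_eq hz.ne'])
  rw [log_div hu.ne' hz.ne'] at h
  rw [sub_div, div_self hz.ne']
  linarith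

end Real

theorem log_div_lt_log_div_of_ne {ζ z u : ℝ} (hz : 1 < z) (hzeq : z * log z - z - ζ + 1 = 0)
    (hu : 0 < u) (hζu : 0 < ζ + u - 1) (hne : u ≠ z) :
    log u / (ζ + u - 1) < log z / (ζ + z - 1) := by
  have hz₀ : 0 < z := by linarith
  have hmax : log z / (ζ + z - 1) = 1 / z := by
    have : 0 < ζ + z - 1 := by nlinarith [log_pos hz]
    rw [div_eq_div_iff this.ne' hz₀.ne']
    linarith
  have htangent : z * log u < z * log z + (u - z) := by
    have h := mul_lt_mul_of_pos_left (log_lt_log_add_sub_div hu hz₀ hne) hz₀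
    rwa [mul_add, mul_div_cancel₀ _ hz₀.ne'] at h
  rw [hmax, div_lt_div_iff₀ hζu hz₀]
  linarith

theorem one_add_mul_sub_div_eq_iff {ζ α u : ℝ} (hα : α ≠ 0) (hu : ζ + u - 1 ≠ 0) :
    1 + ζ * (1 - α) / α = u ↔ α = ζ / (ζ + u - 1) := by
  rw [eq_div_iff hu]
  field_simp
  constructor <;> intro h <;> linarith

/-- If `z* > 1` solves `z ln z − z − ζ + 1 = 0` and `α₀ = ζ/(ζ + z* − 1)`, then
`α₀ ∈ (0,1)` and `α₀` is the unique global maximizer of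
`g_ζ(α) = α log₂(1 + ζ(1−α)/α)` on `(0,1)`. -/
theorem myopic_unconstrained_maximizer (ζ : ℝ) (hζ : 0 < ζ)
    (z : ℝ) (hz : 1 < z) (hzeq : z * Real.log z - z - ζ + 1 = 0)
    (α₀ : ℝ) (hα₀ : α₀ = ζ / (ζ + z - 1)) :
    α₀ ∈ Set.Ioo (0 : ℝ) 1 ∧
      ∀ α ∈ Set.Ioo (0 : ℝ) 1, α ≠ α₀ →
        α * Real.logb 2 (1 + ζ * (1 - α) / α)
          < α₀ * Real.logb 2 (1 + ζ * (1 - α₀) / α₀) := by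
  have hd : 0 < ζ + z - 1 := by linarith
  have hα₀mem : α₀ ∈ Set.Ioo (0 : ℝ) 1 := by
    rw [hα₀]
    exact ⟨div_pos hζ hd, (div_lt_one hd).2 (by linarith)⟩
  refine ⟨hα₀mem, fun α ⟨hα0, hα1⟩ hne => ?_⟩
  set u := 1 + ζ * (1 - α) / α with hu
  have hsnr : 0 < ζ * (1 - α) / α := div_pos (mul_pos hζ (sub_pos.2 hα1)) hα0
  have hζu : 0 < ζ + u - 1 := by linarith
  have hα : α = ζ / (ζ + u - 1) := (one_add_mul_sub_div_eq_iff hα0.ne' hζu.ne').1 hu.symm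
  have hsnr₀ : 1 + ζ * (1 - α₀) / α₀ = z :=
    (one_add_mul_sub_div_eq_iff hα₀mem.1.ne' hd.ne').2 hα₀
  have hune : u ≠ z := by
    rintro rfl
    exact hne (hα.trans hα₀.symm)
  have hscale : 0 < ζ / log 2 := div_pos hζ (log_pos one_lt_two)
  rw [hsnr₀]
  calc α * logb 2 u = ζ / log 2 * (log u / (ζ + u - 1)) := by rw [hα, logb]; ring
    _ < ζ / log 2 * (log z / (ζ + z - 1)) :=
      mul_lt_mul_of_pos_left (log_div_lt_log_div_of_ne hz hzeq (by linarith) hζu hune) hscale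
    _ = α₀ * logb 2 z := by rw [hα₀, logb]; ring
end

section
/- Fix ζ > 0 and Ψ ∈ (0,1). Let z* > 1 be the unique solution of z·ln z − z − ζ + 1 = 0 and set α₀ = ζ/(ζ + z* − 1). Then α* = max{α₀, Ψ} maximizes g_ζ(α) = α · log₂(1 + ζ(1−α)/α) over the constrained interval {α : Ψ ≤ α < 1}; that is, g_ζ(α) ≤ g_ζ(α*) for every α with Ψ ≤ α < 1. -/
/-!
Write `u(α) = 1 + ζ(1-α)/α` (`snr`) and `f(α) = α ln u(α)` (`rate`), so that `g_ζ = f / ln 2`.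
Since `α u(α) = ζ + (1-ζ)α` is affine, the tangent inequality `ln x ≤ ln w + (x - w)/w` of
the logarithm at `w = u(β)` gives `f(α) ≤ f(β) + (α - β) h(u(β)) / u(β)` with
`h(w) = w ln w - w - ζ + 1` (`stationarity`): `f` lies below its tangent at `β`, whose slope
has the sign of `h(u(β))`. As `h` increases on `[1, ∞)` and vanishes at `z*`, the slope is
zero at `α₀ = u⁻¹(z*)` and nonpositive at every `β ≥ α₀`, in particular at `Ψ` when `α₀ ≤ Ψ`.
-/

open Real

noncomputable section

namespace Myopic

def snr (ζ α : ℝ) : ℝ := 1 + ζ * (1 - α) / α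

def rate (ζ α : ℝ) : ℝ := α * log (snr ζ α)

def stationarity (ζ w : ℝ) : ℝ := w * log w - w - ζ + 1

lemma log_le_log_add_sub_div {x w : ℝ} (hx : 0 < x) (hw : 0 < w) :
    log x ≤ log w + (x - w) / w := by
  have h := log_le_sub_one_of_pos (div_pos hx hw)
  rw [log_div hx.ne' hw.ne', div_sub_one hw.ne'] at h
  linarith

lemma monotoneOn_stationarity (ζ : ℝ) : MonotoneOn (stationarity ζ) (Set.Ici 1) := by
  intro w hw z _ hwz
  have hw0 : 0 < w := one_pos.trans_le hw
  have hz0 : 0 < z := hw0.trans_le hwz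
  have hcross : z * log w ≤ z * log z + (w - z) := by
    have := mul_le_mul_of_nonneg_left (log_le_log_add_sub_div hw0 hz0) hz0.le
    rwa [mul_add, mul_div_cancel₀ _ hz0.ne'] at this
  have hsign : (w - z) * log w ≤ 0 :=
    mul_nonpos_of_nonpos_of_nonneg (sub_nonpos.2 hwz) (log_nonneg hw)
  unfold stationarity
  linarith

lemma one_le_snr {ζ α : ℝ} (hζ : 0 ≤ ζ) (hα : 0 < α) (hα1 : α ≤ 1) : 1 ≤ snr ζ α := by
  unfold snr
  have : 0 ≤ ζ * (1 - α) / α := div_nonneg (mul_nonneg hζ (by linarith)) hα.le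
  linarith

lemma snr_antitoneOn {ζ : ℝ} (hζ : 0 ≤ ζ) : AntitoneOn (snr ζ) (Set.Ioi 0) := by
  intro α hα β hβ hαβ
  have hsnr : ∀ γ : ℝ, 0 < γ → snr ζ γ = 1 - ζ + ζ / γ := fun γ hγ => by
    unfold snr; field_simp; ring
  rw [hsnr α hα, hsnr β hβ]
  gcongr

lemma snr_div_add_sub_one {ζ z : ℝ} (hζ : ζ ≠ 0) (hz : ζ + z - 1 ≠ 0) :
    snr ζ (ζ / (ζ + z - 1)) = z := by
  unfold snr
  field_simp
  ring

lemma rate_le_rate_add_mul {ζ α β : ℝ} (hζ : 0 ≤ ζ) (hα : 0 < α) (hα1 : α ≤ 1)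
    (hβ : 0 < β) (hβ1 : β ≤ 1) :
    rate ζ α ≤ rate ζ β + (α - β) * (stationarity ζ (snr ζ β) / snr ζ β) := by
  set w := snr ζ β with hw_def
  have hw : 0 < w := one_pos.trans_le (one_le_snr hζ hβ hβ1)
  have hu : 0 < snr ζ α := one_pos.trans_le (one_le_snr hζ hα hα1)
  have htangent := mul_le_mul_of_nonneg_left (log_le_log_add_sub_div hu hw) hα.le
  have hdiff : α * (snr ζ α - w) = ζ * (β - α) / β := by
    rw [hw_def]; unfold snr; field_simp; ring
  have hζβ : ζ / β = w + ζ - 1 := by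
    rw [hw_def]; unfold snr; field_simp; ring
  calc rate ζ α ≤ α * (log w + (snr ζ α - w) / w) := htangent
    _ = α * log w + (β - α) * (ζ / β) / w := by
      rw [mul_add, ← mul_div_assoc, hdiff]; ring
    _ = rate ζ β + (α - β) * (stationarity ζ w / w) := by
      rw [hζβ]; unfold rate stationarity; field_simp; ring

lemma rate_le_of_mul_stationarity_nonpos {ζ α β : ℝ} (hζ : 0 ≤ ζ) (hα : 0 < α) (hα1 : α ≤ 1)
    (hβ : 0 < β) (hβ1 : β ≤ 1) (hslope : (α - β) * stationarity ζ (snr ζ β) ≤ 0) :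
    rate ζ α ≤ rate ζ β := by
  have hw : 0 < snr ζ β := one_pos.trans_le (one_le_snr hζ hβ hβ1)
  have := rate_le_rate_add_mul hζ hα hα1 hβ hβ1
  rw [← mul_div_assoc] at this
  linarith [div_nonpos_of_nonpos_of_nonneg hslope hw.le]

lemma mul_logb_eq_rate_div (ζ α : ℝ) :
    α * logb 2 (1 + ζ * (1 - α) / α) = rate ζ α / log 2 := by
  unfold rate snr logb
  ring

end Myopic

end

open Myopic in
/-- Constrained myopic optimum: if `z* > 1` solves `z ln z − z − ζ + 1 = 0`,
`α₀ = ζ/(ζ + z* − 1)` and `Ψ ∈ (0,1)`, then `α* = max {α₀, Ψ}` maximizes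
`g_ζ(α) = α log₂(1 + ζ(1−α)/α)` over `{α : Ψ ≤ α < 1}`. -/
theorem myopic_constrained_maximizer (ζ Ψ : ℝ) (hζ : 0 < ζ)
    (hΨ : Ψ ∈ Set.Ioo (0 : ℝ) 1)
    (z : ℝ) (hz : 1 < z) (hzeq : z * Real.log z - z - ζ + 1 = 0)
    (α₀ : ℝ) (hα₀ : α₀ = ζ / (ζ + z - 1))
    (αstar : ℝ) (hαstar : αstar = max α₀ Ψ) :
    ∀ α : ℝ, Ψ ≤ α → α < 1 →
      α * Real.logb 2 (1 + ζ * (1 - α) / α)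
        ≤ αstar * Real.logb 2 (1 + ζ * (1 - αstar) / αstar) := by
  intro α hΨα hα1
  have hden : 0 < ζ + z - 1 := by linarith
  have hα₀pos : 0 < α₀ := hα₀ ▸ div_pos hζ hden
  have hα₀1 : α₀ ≤ 1 := by rw [hα₀, div_le_one hden]; linarith
  have hsnr₀ : snr ζ α₀ = z := hα₀ ▸ snr_div_add_sub_one hζ.ne' hden.ne'
  have hslope : (α - αstar) * stationarity ζ (snr ζ αstar) ≤ 0 := by
    rcases le_total α₀ Ψ with hle | hle
    · have hsnr_le : snr ζ Ψ ≤ z := hsnr₀ ▸ snr_antitoneOn hζ.le hα₀pos hΨ.1 hle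
      have hstat : stationarity ζ (snr ζ Ψ) ≤ 0 := hzeq ▸ monotoneOn_stationarity ζ
        (one_le_snr hζ.le hΨ.1 hΨ.2.le) hz.le hsnr_le
      rw [hαstar, max_eq_right hle]
      exact mul_nonpos_of_nonneg_of_nonpos (sub_nonneg.2 hΨα) hstat
    · rw [hαstar, max_eq_left hle, hsnr₀, stationarity, hzeq, mul_zero]
  have hαstar_pos : 0 < αstar := hαstar ▸ hα₀pos.trans_le (le_max_left _ _)
  have hαstar1 : αstar ≤ 1 := hαstar ▸ max_le hα₀1 hΨ.2.le
  rw [mul_logb_eq_rate_div, mul_logb_eq_rate_div]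
  gcongr
  exact rate_le_of_mul_stationarity_nonpos hζ.le (hΨ.1.trans_le hΨα) hα1.le hαstar_pos hαstar1
    hslope
end
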